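/- arXiv:1112.3452 — 5 statements merged into one kernel-verified Lean document; each statement's English description precedes it below -/
import Mathlib

section
/- Let $a_1,\ldots,a_m$ (with $m>1$) and $b$ be real numbers satisfying $(\sum_{i=1}^m a_i)^2 \geq (m-1)\sum_{i=1}^m a_i^2 + b$. Then for all indices $i \neq j$ we have $2 a_i a_j \geq \frac{b}{m-1}$. -/
/-!
Merging `a i` and `a j` into the single entry `a i + a j` keeps the sum and raises the sum of
squares by `2 a i a j`; Cauchy–Schwarz for these `m - 1` numbers gives
`(∑ a)² ≤ (m - 1) (∑ a² + 2 a i a j)`, which together with the hypothesis leaves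
`b ≤ (m - 1) · 2 a i a j`.
-/

open Finset

theorem Finset.sum_erase_comp_update_add {ι α β : Type*} [DecidableEq ι] [Add α]
    [AddCommMonoid β] (φ : α → β) (f : ι → α) {s : Finset ι} {i j : ι} (hi : i ∈ s)
    (hj : j ∈ s) (hij : i ≠ j) :
    ∑ k ∈ s.erase j, φ (Function.update f i (f i + f j) k) + φ (f i) + φ (f j) =
      ∑ k ∈ s, φ (f k) + φ (f i + f j) := by
  have hi' : i ∈ s.erase j := mem_erase.2 ⟨hij, hi⟩
  have hrest : ∀ k ∈ (s.erase j).erase i,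
      φ (Function.update f i (f i + f j) k) = φ (f k) := fun k hk ↦ by
    rw [Function.update_of_ne (ne_of_mem_erase hk)]
  rw [← add_sum_erase _ _ hi', sum_congr rfl hrest, Function.update_self,
    ← add_sum_erase _ _ hj, ← add_sum_erase _ _ hi']
  abel

theorem Finset.sq_sum_le_card_sub_one_mul_sum_sq_add {ι R : Type*} [DecidableEq ι] [CommRing R]
    [LinearOrder R] [IsStrictOrderedRing R] (f : ι → R) {s : Finset ι} {i j : ι} (hi : i ∈ s)
    (hj : j ∈ s) (hij : i ≠ j) :
    (∑ k ∈ s, f k) ^ 2 ≤ (#s - 1) * (∑ k ∈ s, f k ^ 2 + 2 * f i * f j) := by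
  set g := Function.update f i (f i + f j)
  have hsum := sum_erase_comp_update_add id f hi hj hij
  have hsq := sum_erase_comp_update_add (· ^ 2) f hi hj hij
  have hcs := sq_sum_le_card_mul_sum_sq (s := s.erase j) (f := g)
  rw [cast_card_erase_of_mem hj] at hcs
  simp only [id] at hsum
  have hsum' : ∑ k ∈ s.erase j, g k = ∑ k ∈ s, f k := by linear_combination hsum
  calc (∑ k ∈ s, f k) ^ 2 = (∑ k ∈ s.erase j, g k) ^ 2 := by rw [hsum']
    _ ≤ (#s - 1) * ∑ k ∈ s.erase j, g k ^ 2 := hcs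
    _ = (#s - 1) * (∑ k ∈ s, f k ^ 2 + 2 * f i * f j) := by
      congr 1; linear_combination hsq

theorem chen_lemma_general (m : ℕ) (a : Fin m → ℝ) (b : ℝ)
    (h : (∑ i, a i) ^ 2 ≥ (m - 1 : ℝ) * ∑ i, (a i) ^ 2 + b) :
    ∀ i j : Fin m, i ≠ j → 2 * a i * a j ≥ b / (m - 1 : ℝ) := by
  intro i j hij
  have hm : (1 : ℝ) < m := by exact_mod_cast (show 1 < m by omega)
  have hcs := sq_sum_le_card_sub_one_mul_sum_sq_add a (mem_univ i) (mem_univ j) hij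
  rw [card_univ, Fintype.card_fin] at hcs
  rw [ge_iff_le, div_le_iff₀ (by linarith)]
  linarith

/-- Chen's lemma: if `(∑ aᵢ)² ≥ (m-1) ∑ aᵢ² + b` with `m > 1`, then
`2 aᵢ aⱼ ≥ b / (m-1)` for all `i ≠ j`. -/
theorem chen_lemma (m : ℕ) (hm : 1 < m) (a : Fin m → ℝ) (b : ℝ)
    (h : (∑ i, a i) ^ 2 ≥ (m - 1 : ℝ) * ∑ i, (a i) ^ 2 + b) :
    ∀ i j : Fin m, i ≠ j → 2 * a i * a j ≥ b / (m - 1 : ℝ) :=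
  chen_lemma_general m a b h
end

section
/- Let $a_1,\ldots,a_m$ (with $m>1$) and $b$ be real numbers satisfying the strict inequality $(\sum_{i=1}^m a_i)^2 > (m-1)\sum_{i=1}^m a_i^2 + b$. Then for all indices $i \neq j$ the strict inequality $2 a_i a_j > \frac{b}{m-1}$ holds. -/
open Finset Function

section MergeTwoEntries

variable {ι : Type*} [Fintype ι] [DecidableEq ι]

theorem Finset.sum_erase_update_eq {M : Type*} [AddCommGroup M] (f : ι → M) (v : M) {i j : ι}
    (hij : i ≠ j) :
    ∑ k ∈ univ.erase j, update f i v k = ∑ k, f k + v - f i - f j := by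
  have hi : i ∈ univ.erase j := mem_erase.2 ⟨hij, mem_univ i⟩
  rw [sum_update_of_mem hi, sdiff_singleton_eq_erase, sum_erase_eq_sub hi,
    sum_erase_eq_sub (mem_univ j)]
  abel

/-- Merging the entries `i` and `j` into one leaves `card ι - 1` numbers with the same sum and
with sum of squares increased by `2 f i f j`; Cauchy–Schwarz on those gives the bound. -/
theorem sq_sum_le_card_sub_one_mul {R : Type*} [CommRing R] [LinearOrder R] [IsStrictOrderedRing R]
    (f : ι → R) {i j : ι} (hij : i ≠ j) :
    (∑ k, f k) ^ 2 ≤ (Fintype.card ι - 1 : R) * (∑ k, f k ^ 2 + 2 * f i * f j) := by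
  set g := update f i (f i + f j)
  have hsum : ∑ k ∈ univ.erase j, g k = ∑ k, f k := by
    rw [sum_erase_update_eq f _ hij]
    abel
  have hsq : ∑ k ∈ univ.erase j, g k ^ 2 = ∑ k, f k ^ 2 + 2 * f i * f j := by
    have hg : ∀ k, g k ^ 2 = update (f · ^ 2) i ((f i + f j) ^ 2) k :=
      congrFun (comp_update (· ^ 2) f i _)
    simp only [hg]
    rw [sum_erase_update_eq _ _ hij]
    ring
  have hcard : ((univ.erase j).card : R) = Fintype.card ι - 1 := by
    rw [card_erase_of_mem (mem_univ j), card_univ,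
      Nat.cast_pred (Fintype.card_pos_iff.2 ⟨j⟩)]
  calc (∑ k, f k) ^ 2 = (∑ k ∈ univ.erase j, g k) ^ 2 := by rw [hsum]
    _ ≤ ((univ.erase j).card : R) * ∑ k ∈ univ.erase j, g k ^ 2 := sq_sum_le_card_mul_sum_sq
    _ = _ := by rw [hcard, hsq]

end MergeTwoEntries

theorem chen_lemma_strict_general (m : ℕ) (a : Fin m → ℝ) (b : ℝ)
    (h : (∑ i, a i) ^ 2 > (m - 1 : ℝ) * ∑ i, (a i) ^ 2 + b) :
    ∀ i j : Fin m, i ≠ j → 2 * a i * a j > b / (m - 1 : ℝ) := by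
  intro i j hij
  have hm : (0 : ℝ) < m - 1 := by
    rw [sub_pos]
    exact_mod_cast (by omega : 1 < m)
  have hcs := sq_sum_le_card_sub_one_mul a hij
  rw [Fintype.card_fin] at hcs
  rw [gt_iff_lt, div_lt_iff₀ hm]
  linarith

/-- Strict version of Chen's lemma. -/
theorem chen_lemma_strict (m : ℕ) (hm : 1 < m) (a : Fin m → ℝ) (b : ℝ)
    (h : (∑ i, a i) ^ 2 > (m - 1 : ℝ) * ∑ i, (a i) ^ 2 + b) :
    ∀ i j : Fin m, i ≠ j → 2 * a i * a j > b / (m - 1 : ℝ) :=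
  chen_lemma_strict_general m a b h
end

section
/- Let $A_1,\ldots,A_p$ ($p \geq 2$) be real symmetric $m \times m$ matrices, and let $N(A) = \operatorname{trace}(A^t A)$. Then $\sum_{\alpha,\beta=1}^p \{N(A_\alpha A_\beta - A_\beta A_\alpha) + (\operatorname{trace}(A_\alpha A_\beta))^2\} \leq \frac{3}{2}\big(\sum_{\alpha=1}^p N(A_\alpha)\big)^2$. -/
/-!
Rotating the family by an orthogonal matrix, `A'_α = ∑_γ O_αγ A_γ`, changes neither side, so we
may take the `A_α` pairwise orthogonal for `⟪X, Y⟫ = tr (Xᵀ Y)`; then `∑ (tr A_α A_β)² = ∑ N(A_α)²`.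
The commutator terms are controlled by the estimate: for symmetric `A` and pairwise orthogonal
symmetric `B_β` with `N(B_β) ≤ K`, `∑_β N([A, B_β]) ≤ N(A) (∑_β N(B_β) + K)`. Diagonalising
`A = diag d` turns the left side into `∑_{a,b} w_ab (d_a - d_b)²` with `w_ab = ∑_β (B_β)_ab²`.
Bessel's inequality against `E_ab + E_ba` gives `w_ab ≤ K / 2`, so the degrees of the weighted graph
`w` satisfy `deg a + deg b ≤ (∑ w + K) / 2` on every edge, and the Anderson–Morley bound for its
Laplacian finishes. Taking `K = max_β N(A_β)`, or `K = T - max` at a maximising index, where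
`T = ∑ N(A_α)`, leaves `T² + 2 max (T - max) ≤ 3/2 T²`.
-/

open Matrix

namespace LiLi

section Frobenius

variable {m n R : Type*} [Fintype m] [Fintype n] [CommSemiring R]

def frob : Matrix m n R →ₗ[R] Matrix m n R →ₗ[R] R :=
  LinearMap.mk₂ R (fun X Y => (Xᵀ * Y).trace) (by simp [Matrix.add_mul])
    (by simp) (by simp [Matrix.mul_add]) (by simp)

lemma frob_apply (X Y : Matrix m n R) : frob X Y = (Xᵀ * Y).trace := rfl

lemma frob_eq_sum (X Y : Matrix m n R) : frob X Y = ∑ i, ∑ j, X i j * Y i j := by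
  rw [frob_apply, trace, Finset.sum_comm]
  simp [mul_apply]

lemma frob_comm (X Y : Matrix m n R) : frob X Y = frob Y X := by
  simp only [frob_eq_sum, mul_comm]

lemma frob_single_left [DecidableEq m] [DecidableEq n] (i : m) (j : n) (X : Matrix m n R) :
    frob (single i j 1) X = X i j := by
  simp [frob_eq_sum, single_apply, ite_and]

lemma frob_transpose_mul_mul [DecidableEq n] {V : Matrix n n R} (hV : V * Vᵀ = 1)
    (X Y : Matrix n n R) : frob (Vᵀ * X * V) (Vᵀ * Y * V) = frob X Y := by
  calc frob (Vᵀ * X * V) (Vᵀ * Y * V) = (Vᵀ * (Xᵀ * Y) * V).trace := by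
        simp only [frob_apply, transpose_mul, transpose_transpose, Matrix.mul_assoc]
        rw [← Matrix.mul_assoc V, hV, Matrix.one_mul]
    _ = frob X Y := by rw [trace_mul_cycle, hV, Matrix.one_mul, frob_apply]

end Frobenius

lemma frob_self_nonneg {m n : Type*} [Fintype m] [Fintype n] (X : Matrix m n ℝ) :
    0 ≤ frob X X := by
  rw [frob_eq_sum]
  exact Finset.sum_nonneg fun i _ => Finset.sum_nonneg fun j _ => mul_self_nonneg _

section Rotation

variable {R E F ι : Type*} [CommSemiring R] [AddCommMonoid E] [Module R E] [AddCommMonoid F]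
  [Module R F] [Fintype ι]

def rotate (O : Matrix ι ι R) (f : ι → E) (α : ι) : E := ∑ γ, O α γ • f γ

lemma apply_rotate_rotate (b : E →ₗ[R] E →ₗ[R] R) (O : Matrix ι ι R) (f : ι → E) (α β : ι) :
    b (rotate O f α) (rotate O f β) = (O * of (fun γ δ => b (f γ) (f δ)) * Oᵀ) α β := by
  simp only [rotate, map_sum, map_smul, LinearMap.sum_apply, LinearMap.smul_apply, smul_eq_mul,
    mul_apply, of_apply, transpose_apply, Finset.mul_sum, Finset.sum_mul]
  exact Finset.sum_congr rfl fun δ _ => Finset.sum_congr rfl fun γ _ => by ring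

variable [DecidableEq ι]

lemma sum_apply_rotate_self (b : E →ₗ[R] E →ₗ[R] R) {O : Matrix ι ι R} (hO : Oᵀ * O = 1)
    (f : ι → E) : ∑ α, b (rotate O f α) (rotate O f α) = ∑ γ, b (f γ) (f γ) := by
  simp_rw [apply_rotate_rotate]
  change trace _ = trace (of fun γ δ => b (f γ) (f δ))
  rw [trace_mul_cycle, hO, Matrix.one_mul]

lemma sum_sum_apply_rotate_self (b : E →ₗ[R] E →ₗ[R] F) (q : F →ₗ[R] F →ₗ[R] R)
    {O : Matrix ι ι R} (hO : Oᵀ * O = 1) (f : ι → E) :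
    ∑ α, ∑ β, q (b (rotate O f α) (rotate O f β)) (b (rotate O f α) (rotate O f β))
      = ∑ α, ∑ β, q (b (f α) (f β)) (b (f α) (f β)) := by
  calc _ = ∑ α, ∑ δ, q (b (rotate O f α) (f δ)) (b (rotate O f α) (f δ)) :=
        Finset.sum_congr rfl fun α _ =>
          sum_apply_rotate_self (q.compl₁₂ (b (rotate O f α)) (b (rotate O f α))) hO f
    _ = ∑ δ, ∑ α, q (b (rotate O f α) (f δ)) (b (rotate O f α) (f δ)) := Finset.sum_comm
    _ = ∑ δ, ∑ γ, q (b (f γ) (f δ)) (b (f γ) (f δ)) :=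
        Finset.sum_congr rfl fun δ _ =>
          sum_apply_rotate_self (q.compl₁₂ (b.flip (f δ)) (b.flip (f δ))) hO f
    _ = _ := Finset.sum_comm

end Rotation

lemma sum_sq_le_mul_of_pairwise_orthogonal {E κ : Type*} [AddCommGroup E] [Module ℝ E]
    (b : E →ₗ[ℝ] E →ₗ[ℝ] ℝ) (hb : ∀ x y, b x y = b y x) (hpos : ∀ x, 0 ≤ b x x)
    {s : Finset κ} {v : κ → E} (horth : (s : Set κ).Pairwise fun i j => b (v i) (v j) = 0)
    {K : ℝ} (hK0 : 0 ≤ K) (hK : ∀ i ∈ s, b (v i) (v i) ≤ K) (e : E) :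
    ∑ i ∈ s, b e (v i) ^ 2 ≤ K * b e e := by
  set c := fun i => b e (v i)
  set S := ∑ i ∈ s, c i ^ 2
  have hdiag : ∀ i ∈ s, ∑ j ∈ s, c j * b (v j) (v i) = c i * b (v i) (v i) := fun i hi =>
    Finset.sum_eq_single_of_mem i hi fun j hj hji => by rw [horth hj hi hji, mul_zero]
  -- `t ↦ b (t • e - ∑ cᵢ • vᵢ) (t • e - ∑ cᵢ • vᵢ)` is a nonnegative quadratic polynomial;
  -- its discriminant gives the bound.
  have hquad : ∀ t : ℝ, 0 ≤ b e e * (t * t) + (-2 * S) * t + K * S := by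
    intro t
    have hexp : b (t • e - ∑ i ∈ s, c i • v i) (t • e - ∑ i ∈ s, c i • v i)
        = b e e * (t * t) + (-2 * S) * t + ∑ i ∈ s, c i ^ 2 * b (v i) (v i) := by
      simp only [map_sub, map_smul, map_sum, LinearMap.sub_apply, LinearMap.smul_apply,
        LinearMap.sum_apply, smul_eq_mul]
      have hcross : ∑ i ∈ s, c i * (t * b e (v i) - ∑ j ∈ s, c j * b (v j) (v i))
          = ∑ i ∈ s, (t * c i ^ 2 - c i ^ 2 * b (v i) (v i)) :=
        Finset.sum_congr rfl fun i hi => by rw [hdiag i hi]; ring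
      have hsq : ∑ i ∈ s, c i * b e (v i) = S := Finset.sum_congr rfl fun _ _ => (sq _).symm
      simp only [← hb e, hcross, Finset.sum_sub_distrib, ← Finset.mul_sum, hsq]
      ring
    have hle : ∑ i ∈ s, c i ^ 2 * b (v i) (v i) ≤ K * S := by
      rw [Finset.mul_sum]
      exact Finset.sum_le_sum fun i hi => by
        rw [mul_comm K]; exact mul_le_mul_of_nonneg_left (hK i hi) (sq_nonneg _)
    linarith [hpos (t • e - ∑ i ∈ s, c i • v i)]
  have hdisc := discrim_le_zero hquad
  rw [discrim] at hdisc
  by_contra! hlt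
  have hSpos : 0 < S := (mul_nonneg hK0 (hpos e)).trans_lt hlt
  nlinarith [mul_lt_mul_of_pos_right hlt hSpos]

section WeightedGraph

variable {n : Type*} [Fintype n] {w : n → n → ℝ}

lemma sum_mul_sub_sq_le_of_degree_add_le (hw : ∀ a b, 0 ≤ w a b)
    (hsymm : ∀ a b, w a b = w b a) {M : ℝ} (hM0 : 0 ≤ M)
    (hM : ∀ a b, 0 < w a b → ∑ c, w a c + ∑ c, w b c ≤ M) (d : n → ℝ) :
    ∑ a, ∑ b, w a b * (d a - d b) ^ 2 ≤ 2 * M * ∑ a, d a ^ 2 := by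
  set δ : n → ℝ := fun a => ∑ c, w a c
  have hδ : ∀ a b, w a b ≤ δ a := fun a b =>
    Finset.single_le_sum (fun c _ => hw a c) (Finset.mem_univ b)
  have hedge : ∀ a b, w a b * (d a - d b) ^ 2
      ≤ M * (w a b * (d a ^ 2 / δ a) + w a b * (d b ^ 2 / δ b)) := by
    intro a b
    rcases (hw a b).eq_or_lt with h | h
    · simp [← h]
    have ha : 0 < δ a := h.trans_le (hδ a b)
    have hb : 0 < δ b := (hsymm a b ▸ h).trans_le (hδ b a)
    have hCS : (d a - d b) ^ 2 ≤ (δ a + δ b) * (d a ^ 2 / δ a + d b ^ 2 / δ b) := by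
      rw [div_add_div _ _ ha.ne' hb.ne', mul_div_assoc', le_div_iff₀ (mul_pos ha hb)]
      nlinarith [sq_nonneg (d a * δ b + d b * δ a)]
    calc w a b * (d a - d b) ^ 2 ≤ w a b * ((δ a + δ b) * (d a ^ 2 / δ a + d b ^ 2 / δ b)) :=
          mul_le_mul_of_nonneg_left hCS h.le
      _ ≤ w a b * (M * (d a ^ 2 / δ a + d b ^ 2 / δ b)) := by gcongr; exact hM a b h
      _ = M * (w a b * (d a ^ 2 / δ a) + w a b * (d b ^ 2 / δ b)) := by ring
  have hrow : ∀ a, ∑ b, w a b * (d a ^ 2 / δ a) ≤ d a ^ 2 := by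
    intro a
    rw [← Finset.sum_mul]
    rcases (Finset.sum_nonneg fun c _ => hw a c : 0 ≤ δ a).eq_or_lt with h | h
    · rw [← h]; simp [sq_nonneg]
    · rw [mul_div_cancel₀ _ h.ne']
  have hcol : ∑ a, ∑ b, w a b * (d b ^ 2 / δ b) ≤ ∑ b, d b ^ 2 := by
    rw [Finset.sum_comm]
    exact Finset.sum_le_sum fun b _ => by simpa only [hsymm _ b] using hrow b
  calc ∑ a, ∑ b, w a b * (d a - d b) ^ 2
      ≤ ∑ a, ∑ b, M * (w a b * (d a ^ 2 / δ a) + w a b * (d b ^ 2 / δ b)) :=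
        Finset.sum_le_sum fun a _ => Finset.sum_le_sum fun b _ => hedge a b
    _ = M * (∑ a, ∑ b, w a b * (d a ^ 2 / δ a) + ∑ a, ∑ b, w a b * (d b ^ 2 / δ b)) := by
        simp only [← Finset.mul_sum, Finset.sum_add_distrib]
    _ ≤ M * (∑ a, d a ^ 2 + ∑ b, d b ^ 2) :=
        mul_le_mul_of_nonneg_left (add_le_add (Finset.sum_le_sum fun a _ => hrow a) hcol) hM0
    _ = 2 * M * ∑ a, d a ^ 2 := by ring

lemma two_mul_degree_add_degree_le [DecidableEq n] (hw : ∀ a b, 0 ≤ w a b)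
    (hsymm : ∀ a b, w a b = w b a) (hdiag : ∀ a, w a a = 0) {a b : n} (hab : a ≠ b) :
    2 * (∑ c, w a c + ∑ c, w b c) ≤ ∑ x, ∑ y, w x y + 2 * w a b := by
  set f : n → ℝ := fun x => ∑ y, w x y - (w x a + w x b)
  have hpair : ∀ x, w x a + w x b ≤ ∑ y, w x y := fun x => by
    rw [← Finset.sum_pair hab]
    exact Finset.sum_le_sum_of_subset_of_nonneg (Finset.subset_univ _) fun y _ _ => hw x y
  have hsum : ∑ x, f x = ∑ x, ∑ y, w x y - (∑ c, w a c + ∑ c, w b c) := by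
    simp only [f, Finset.sum_sub_distrib, Finset.sum_add_distrib, hsymm _ a, hsymm _ b]
  have hle : f a + f b ≤ ∑ x, f x := by
    rw [← Finset.sum_pair hab]
    exact Finset.sum_le_sum_of_subset_of_nonneg (Finset.subset_univ _) fun x _ _ =>
      sub_nonneg.mpr (hpair x)
  simp only [f, hdiag, hsymm b a] at hle
  linarith

lemma sum_mul_sub_sq_le_of_le [DecidableEq n] (hw : ∀ a b, 0 ≤ w a b)
    (hsymm : ∀ a b, w a b = w b a) {c W : ℝ} (hc : ∀ a b, a ≠ b → w a b ≤ c)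
    (hW : ∑ a, ∑ b, w a b ≤ W) (hcW : 0 ≤ W + 2 * c) (d : n → ℝ) :
    ∑ a, ∑ b, w a b * (d a - d b) ^ 2 ≤ (W + 2 * c) * ∑ a, d a ^ 2 := by
  set w' : n → n → ℝ := fun a b => if a = b then 0 else w a b
  have hw' : ∀ a b, 0 ≤ w' a b := fun a b => by
    simp only [w']; split_ifs
    exacts [le_rfl, hw a b]
  have hw'_le : ∀ a b, w' a b ≤ w a b := fun a b => by
    simp only [w']; split_ifs
    exacts [hw a b, le_rfl]
  have hsymm' : ∀ a b, w' a b = w' b a := fun a b => by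
    simp only [w', eq_comm (a := a), hsymm a b]
  have hdiag' : ∀ a, w' a a = 0 := fun a => if_pos rfl
  have hsame : ∑ a, ∑ b, w' a b * (d a - d b) ^ 2 = ∑ a, ∑ b, w a b * (d a - d b) ^ 2 :=
    Finset.sum_congr rfl fun a _ => Finset.sum_congr rfl fun b _ => by
      by_cases h : a = b <;> simp [w', h]
  have hW' : ∑ a, ∑ b, w' a b ≤ W :=
    (Finset.sum_le_sum fun a _ => Finset.sum_le_sum fun b _ => hw'_le a b).trans hW
  have h := sum_mul_sub_sq_le_of_degree_add_le hw' hsymm' (M := (W + 2 * c) / 2) (by positivity)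
    (fun a b hab => ?_) d
  · linarith
  have hne : a ≠ b := fun h => by simp [h, hdiag'] at hab
  have hc' : w' a b ≤ c := by simpa [w', hne] using hc a b hne
  linarith [two_mul_degree_add_degree_le hw' hsymm' hdiag' hne]

end WeightedGraph

lemma isSymm_transpose_mul_mul {n R : Type*} [Fintype n] [CommSemiring R] (V : Matrix n n R)
    {X : Matrix n n R} (hX : X.IsSymm) : (Vᵀ * X * V).IsSymm := by
  simp [IsSymm, transpose_mul, hX.eq, Matrix.mul_assoc]

section Commutator

variable {n κ : Type*} [Fintype n] [DecidableEq n]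

lemma frob_diagonal_self (d : n → ℝ) : frob (diagonal d) (diagonal d) = ∑ a, d a ^ 2 := by
  simp [frob_eq_sum, diagonal_apply, sq]

lemma frob_diagonal_commutator_self (d : n → ℝ) (X : Matrix n n ℝ) :
    frob (diagonal d * X - X * diagonal d) (diagonal d * X - X * diagonal d)
      = ∑ a, ∑ b, (d a - d b) ^ 2 * X a b ^ 2 := by
  simp only [frob_eq_sum, Matrix.sub_apply, diagonal_mul, mul_diagonal]
  exact Finset.sum_congr rfl fun a _ => Finset.sum_congr rfl fun b _ => by ring

variable {s : Finset κ} {K : ℝ}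

lemma sum_sq_apply_le_of_pairwise_frob {C : κ → Matrix n n ℝ} (hC : ∀ β ∈ s, (C β).IsSymm)
    (horth : (s : Set κ).Pairwise fun β γ => frob (C β) (C γ) = 0)
    (hK0 : 0 ≤ K) (hK : ∀ β ∈ s, frob (C β) (C β) ≤ K) {a b : n} (hab : a ≠ b) :
    ∑ β ∈ s, C β a b ^ 2 ≤ K / 2 := by
  have hbessel := sum_sq_le_mul_of_pairwise_orthogonal frob frob_comm frob_self_nonneg horth
    hK0 hK (single a b 1 + single b a 1)
  have hentry : ∀ β ∈ s, frob (single a b 1 + single b a 1) (C β) = 2 * C β a b := fun β hβ => by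
    rw [map_add, LinearMap.add_apply, frob_single_left, frob_single_left, (hC β hβ).apply a b]
    ring
  have hself : frob (single a b 1 + single b a 1) (single a b 1 + single b a 1) = (2 : ℝ) := by
    simp [frob_single_left, hab, hab.symm, one_add_one_eq_two]
  rw [Finset.sum_congr rfl fun β hβ => by rw [hentry β hβ], hself] at hbessel
  simp only [mul_pow, ← Finset.mul_sum] at hbessel
  linarith

lemma sum_frob_diagonal_commutator_le (d : n → ℝ) {C : κ → Matrix n n ℝ}
    (hC : ∀ β ∈ s, (C β).IsSymm) (horth : (s : Set κ).Pairwise fun β γ => frob (C β) (C γ) = 0)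
    (hK0 : 0 ≤ K) (hK : ∀ β ∈ s, frob (C β) (C β) ≤ K) :
    ∑ β ∈ s, frob (diagonal d * C β - C β * diagonal d) (diagonal d * C β - C β * diagonal d)
      ≤ frob (diagonal d) (diagonal d) * (∑ β ∈ s, frob (C β) (C β) + K) := by
  set w : n → n → ℝ := fun a b => ∑ β ∈ s, C β a b ^ 2
  have hw_symm : ∀ a b, w a b = w b a := fun a b =>
    Finset.sum_congr rfl fun β hβ => by rw [(hC β hβ).apply a b]
  have hw_sum : ∑ a, ∑ b, w a b = ∑ β ∈ s, frob (C β) (C β) := by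
    simp only [w, frob_eq_sum, sq]
    rw [eq_comm, Finset.sum_comm]
    exact Finset.sum_congr rfl fun a _ => Finset.sum_comm
  have hLHS : ∑ β ∈ s, frob (diagonal d * C β - C β * diagonal d)
      (diagonal d * C β - C β * diagonal d) = ∑ a, ∑ b, w a b * (d a - d b) ^ 2 := by
    simp only [frob_diagonal_commutator_self, w, Finset.sum_mul]
    rw [Finset.sum_comm]
    refine Finset.sum_congr rfl fun a _ => ?_
    rw [Finset.sum_comm]
    exact Finset.sum_congr rfl fun b _ => Finset.sum_congr rfl fun β _ => mul_comm _ _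
  have hS : 0 ≤ ∑ β ∈ s, frob (C β) (C β) := Finset.sum_nonneg fun β _ => frob_self_nonneg _
  rw [hLHS, frob_diagonal_self]
  calc _ ≤ (∑ β ∈ s, frob (C β) (C β) + 2 * (K / 2)) * ∑ a, d a ^ 2 :=
        sum_mul_sub_sq_le_of_le (fun a b => by positivity) hw_symm
          (fun a b => sum_sq_apply_le_of_pairwise_frob hC horth hK0 hK) hw_sum.le
          (by positivity) d
    _ = _ := by ring

lemma _root_.Matrix.IsSymm.exists_transpose_mul_mul_eq_diagonal {S : Matrix n n ℝ}
    (hS : S.IsSymm) : ∃ V : Matrix n n ℝ, V * Vᵀ = 1 ∧ ∃ d : n → ℝ, Vᵀ * S * V = diagonal d := by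
  have hSH : S.IsHermitian := by
    rw [IsHermitian, conjTranspose_eq_transpose_of_trivial, hS.eq]
  have hV := mem_unitaryGroup_iff.mp hSH.eigenvectorUnitary.2
  have hdiag := hSH.conjStarAlgAut_star_eigenvectorUnitary
  rw [Unitary.conjStarAlgAut_star_apply] at hdiag
  simp only [star_eq_conjTranspose, conjTranspose_eq_transpose_of_trivial] at hV hdiag
  exact ⟨hSH.eigenvectorUnitary, hV, hSH.eigenvalues, by simpa using hdiag⟩

lemma transpose_mul_commutator_mul {R : Type*} [CommRing R] {V : Matrix n n R}
    (hV : V * Vᵀ = 1) (X Y : Matrix n n R) :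
    Vᵀ * (X * Y - Y * X) * V = Vᵀ * X * V * (Vᵀ * Y * V) - Vᵀ * Y * V * (Vᵀ * X * V) := by
  have hmul : ∀ X Y : Matrix n n R, Vᵀ * X * V * (Vᵀ * Y * V) = Vᵀ * (X * Y) * V := fun X Y =>
    calc _ = Vᵀ * X * (V * Vᵀ) * Y * V := by noncomm_ring
      _ = _ := by rw [hV]; noncomm_ring
  rw [hmul, hmul, Matrix.mul_sub, Matrix.sub_mul]

lemma sum_frob_commutator_le {A : Matrix n n ℝ} (hA : A.IsSymm) {B : κ → Matrix n n ℝ}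
    (hB : ∀ β ∈ s, (B β).IsSymm) (horth : (s : Set κ).Pairwise fun β γ => frob (B β) (B γ) = 0)
    (hK0 : 0 ≤ K) (hK : ∀ β ∈ s, frob (B β) (B β) ≤ K) :
    ∑ β ∈ s, frob (A * B β - B β * A) (A * B β - B β * A)
      ≤ frob A A * (∑ β ∈ s, frob (B β) (B β) + K) := by
  obtain ⟨V, hV, d, hd⟩ := hA.exists_transpose_mul_mul_eq_diagonal
  have key := sum_frob_diagonal_commutator_le d (C := fun β => Vᵀ * B β * V)
    (fun β hβ => isSymm_transpose_mul_mul V (hB β hβ))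
    (fun β hβ γ hγ hne => by simpa [frob_transpose_mul_mul hV] using horth hβ hγ hne) hK0
    (fun β hβ => by simpa [frob_transpose_mul_mul hV] using hK β hβ)
  simpa only [← hd, ← transpose_mul_commutator_mul hV, frob_transpose_mul_mul hV] using key

end Commutator

lemma isSymm_rotate {n ι R : Type*} [Fintype ι] [CommSemiring R] {A : ι → Matrix n n R}
    (hA : ∀ α, (A α).IsSymm) (O : Matrix ι ι R) (α : ι) : (rotate O A α).IsSymm := by
  have hA' : ∀ γ, (A γ)ᵀ = A γ := hA
  simp [rotate, IsSymm, transpose_sum, hA']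

section Family

variable {n ι : Type*} [Fintype n] [Fintype ι] [DecidableEq ι]

lemma exists_rotate_pairwise_frob_eq_zero (A : ι → Matrix n n ℝ) :
    ∃ O : Matrix ι ι ℝ, Oᵀ * O = 1 ∧
      Pairwise fun α β => frob (rotate O A α) (rotate O A β) = 0 := by
  have hG : (of fun γ δ => frob (A γ) (A δ)).IsSymm := IsSymm.ext fun γ δ => frob_comm _ _
  obtain ⟨V, hV, d, hd⟩ := hG.exists_transpose_mul_mul_eq_diagonal
  refine ⟨Vᵀ, by rw [transpose_transpose, hV], fun α β hne => ?_⟩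
  dsimp only
  rw [apply_rotate_rotate, transpose_transpose, hd, diagonal_apply_ne _ hne]

lemma sum_sum_frob_commutator_add_sq_trace_rotate {R : Type*} [CommRing R] {O : Matrix ι ι R}
    (hO : Oᵀ * O = 1) (A : ι → Matrix n n R) :
    ∑ α, ∑ β, (frob (rotate O A α * rotate O A β - rotate O A β * rotate O A α)
        (rotate O A α * rotate O A β - rotate O A β * rotate O A α)
        + (rotate O A α * rotate O A β).trace ^ 2)
      = ∑ α, ∑ β, (frob (A α * A β - A β * A α) (A α * A β - A β * A α)
        + (A α * A β).trace ^ 2) := by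
  have hcomm := sum_sum_apply_rotate_self
    (LinearMap.mul R (Matrix n n R) - (LinearMap.mul R (Matrix n n R)).flip) frob hO A
  have htrace := sum_sum_apply_rotate_self
    ((LinearMap.mul R (Matrix n n R)).compr₂ (traceLinearMap n R R)) (LinearMap.mul R R) hO A
  simp only [LinearMap.sub_apply, LinearMap.flip_apply, LinearMap.mul_apply',
    LinearMap.compr₂_apply, traceLinearMap_apply] at hcomm htrace
  simp only [Finset.sum_add_distrib, sq, hcomm, htrace]

variable [DecidableEq n] {A : ι → Matrix n n ℝ}

lemma sum_sum_frob_commutator_add_sum_sq_le (hA : ∀ α, (A α).IsSymm)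
    (horth : Pairwise fun α β => frob (A α) (A β) = 0) {μ : ι}
    (hμ : ∀ α, frob (A α) (A α) ≤ frob (A μ) (A μ)) :
    ∑ α, ∑ β, frob (A α * A β - A β * A α) (A α * A β - A β * A α)
        + ∑ α, frob (A α) (A α) ^ 2
      ≤ (∑ α, frob (A α) (A α)) ^ 2
        + 2 * frob (A μ) (A μ) * (∑ α, frob (A α) (A α) - frob (A μ) (A μ)) := by
  set N : ι → ℝ := fun α => frob (A α) (A α)
  set T := ∑ α, N α
  set K : ι → ℝ := fun α => if α = μ then T - N μ else N μ
  have hN : ∀ α, 0 ≤ N α := fun α => frob_self_nonneg _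
  have hTμ : ∀ β ∈ Finset.univ.erase μ, N β ≤ T - N μ := fun β hβ => by
    rw [← Finset.sum_erase_eq_sub (Finset.mem_univ μ)]
    exact Finset.single_le_sum (fun γ _ => hN γ) hβ
  have hTμ0 : 0 ≤ T - N μ := by
    rw [← Finset.sum_erase_eq_sub (Finset.mem_univ μ)]
    exact Finset.sum_nonneg fun γ _ => hN γ
  have hcomm : ∀ α, ∑ β, frob (A α * A β - A β * A α) (A α * A β - A β * A α)
      ≤ N α * (T - N α + K α) := fun α => by
    rw [← Finset.sum_erase (f := fun β => frob (A α * A β - A β * A α) (A α * A β - A β * A α))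
      (a := α) _ (by simp), ← Finset.sum_erase_eq_sub (Finset.mem_univ α)]
    refine sum_frob_commutator_le (hA α) (fun β _ => hA β) (fun β _ γ _ h => horth h) ?_
      fun β hβ => ?_
    · by_cases h : α = μ
      · simpa [K, h] using hTμ0
      · simpa [K, h] using hN μ
    · by_cases h : α = μ
      · subst h; simpa [K] using hTμ β hβ
      · simpa [K, h] using hμ β
  have hK : ∑ α, N α * K α = 2 * N μ * (T - N μ) := by
    rw [← Finset.add_sum_erase _ _ (Finset.mem_univ μ), Finset.sum_congr rfl fun α hα => by
      rw [show K α = N μ from if_neg (Finset.ne_of_mem_erase hα)], ← Finset.sum_mul,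
      Finset.sum_erase_eq_sub (Finset.mem_univ μ), show K μ = T - N μ from if_pos rfl]
    ring
  calc _ ≤ ∑ α, N α * (T - N α + K α) + ∑ α, N α ^ 2 := by
        gcongr with α; exact hcomm α
    _ = T ^ 2 + 2 * N μ * (T - N μ) := by
        rw [← hK, sq T, Finset.sum_mul, ← Finset.sum_add_distrib, ← Finset.sum_add_distrib]
        exact Finset.sum_congr rfl fun α _ => by ring

lemma li_li_of_pairwise_frob_eq_zero (hA : ∀ α, (A α).IsSymm)
    (horth : Pairwise fun α β => frob (A α) (A β) = 0) :
    ∑ α, ∑ β, (frob (A α * A β - A β * A α) (A α * A β - A β * A α) + (A α * A β).trace ^ 2)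
      ≤ 3 / 2 * (∑ α, frob (A α) (A α)) ^ 2 := by
  rcases isEmpty_or_nonempty ι with hι | hι
  · simp
  obtain ⟨μ, hμ⟩ := Finite.exists_max fun α => frob (A α) (A α)
  have htrace : ∀ α, ∑ β, (A α * A β).trace ^ 2 = frob (A α) (A α) ^ 2 := fun α => by
    have hfrob : ∀ β, (A α * A β).trace = frob (A α) (A β) := fun β => by
      rw [frob_apply, (hA α).eq]
    simp_rw [hfrob]
    exact Finset.sum_eq_single α (fun β _ hβ => by rw [horth hβ.symm, sq, zero_mul]) (by simp)
  have hcomm := sum_sum_frob_commutator_add_sum_sq_le hA horth hμ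
  simp only [Finset.sum_add_distrib, htrace]
  nlinarith [sq_nonneg (∑ α, frob (A α) (A α) - 2 * frob (A μ) (A μ))]

end Family

end LiLi

theorem li_li_inequality_general (m p : ℕ)
    (A : Fin p → Matrix (Fin m) (Fin m) ℝ) (hsymm : ∀ α, (A α).IsSymm) :
    (∑ α, ∑ β,
        (((A α * A β - A β * A α)ᵀ * (A α * A β - A β * A α)).trace
          + ((A α * A β).trace) ^ 2))
      ≤ (3 / 2 : ℝ) * (∑ α, ((A α)ᵀ * A α).trace) ^ 2 := by
  obtain ⟨O, hO, horth⟩ := LiLi.exists_rotate_pairwise_frob_eq_zero A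
  have h := LiLi.li_li_of_pairwise_frob_eq_zero (LiLi.isSymm_rotate hsymm O) horth
  rwa [LiLi.sum_sum_frob_commutator_add_sq_trace_rotate hO,
    LiLi.sum_apply_rotate_self LiLi.frob hO] at h

/-- The Li–Li inequality for symmetric matrices, where `N A = trace (Aᵀ * A)`
is the squared Frobenius norm. -/
theorem li_li_inequality (m p : ℕ) (hp : 2 ≤ p)
    (A : Fin p → Matrix (Fin m) (Fin m) ℝ) (hsymm : ∀ α, (A α).IsSymm) :
    (∑ α, ∑ β,
        (((A α * A β - A β * A α)ᵀ * (A α * A β - A β * A α)).trace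
          + ((A α * A β).trace) ^ 2))
      ≤ (3 / 2 : ℝ) * (∑ α, ((A α)ᵀ * A α).trace) ^ 2 :=
  li_li_inequality_general m p A hsymm
end

section
/- Let $A_1, A_2$ be real symmetric $m \times m$ matrices satisfying the equality case of the Li-Li inequality nontrivially, i.e., $N(A_1 A_2 - A_2 A_1) + N(A_2 A_1 - A_1 A_2) + (\operatorname{trace}(A_1 A_2))^2 + (\operatorname{trace}(A_2 A_1))^2 + (\operatorname{trace} A_1^2)^2 + (\operatorname{trace} A_2^2)^2 = \frac{3}{2}(N(A_1) + N(A_2))^2$ with $A_1, A_2$ not both zero. Then $N(A_1) = N(A_2)$, $\operatorname{trace}(A_1 A_2) = 0$, and $\operatorname{trace} A_1 = \operatorname{trace} A_2 = 0$. -/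
/-!
Diagonalize `A₁ = diagonal a` by an orthogonal change of basis and let `B` be `A₂` in that basis,
so that `N [A₁, A₂] = ∑ᵢⱼ (aᵢ - aⱼ)² Bᵢⱼ²` and `tr (A₁ A₂) = ∑ᵢ aᵢ Bᵢᵢ`. Since `(aᵢ - aⱼ)²` is at
most `2 ∑ₖ aₖ²` off the diagonal and vanishes on it, Cauchy–Schwarz for the diagonal part gives
`N [A₁, A₂] + 2 tr (A₁ A₂)² ≤ 2 N A₁ N A₂`. Inserted into the hypothesis this leaves
`(N A₁ - N A₂)² / 2 + 2 tr (A₁ A₂)² ≤ 0`, so the commutator bound is attained. Then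
`(aᵢ - aⱼ)² = 2 ∑ₖ aₖ²` at some `Bᵢⱼ ≠ 0`, which forces `aᵢ = -aⱼ` and `aₖ = 0` for every other `k`,
so `tr A₁ = 0`; exchanging the roles of `A₁` and `A₂` gives `tr A₂ = 0`.
-/

open Matrix Unitary

variable {n : Type*} [Fintype n]

namespace Finset

theorem two_mul_sum_sq_sub_sq_sub_eq [DecidableEq n] (a : n → ℝ) {i j : n} (hij : i ≠ j) :
    2 * ∑ k, a k ^ 2 - (a i - a j) ^ 2 = (a i + a j) ^ 2 + 2 * ∑ k ∈ {i, j}ᶜ, a k ^ 2 := by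
  rw [← sum_add_sum_compl {i, j}, sum_pair hij]
  ring

theorem sq_sub_le_two_mul_sum_sq (a : n → ℝ) (i j : n) : (a i - a j) ^ 2 ≤ 2 * ∑ k, a k ^ 2 := by
  classical
  obtain rfl | hij := eq_or_ne i j
  · simpa using sum_nonneg fun k _ => sq_nonneg (a k)
  · have hsum := two_mul_sum_sq_sub_sq_sub_eq a hij
    have hrest : 0 ≤ ∑ k ∈ {i, j}ᶜ, a k ^ 2 := sum_nonneg fun k _ => sq_nonneg (a k)
    nlinarith [sq_nonneg (a i + a j)]

theorem sq_sub_mul_le (a : n → ℝ) (i j : n) (x : ℝ) :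
    ((a i - a j) * x) ^ 2 ≤ 2 * (∑ k, a k ^ 2) * x ^ 2 := by
  rw [mul_pow]
  exact mul_le_mul_of_nonneg_right (sq_sub_le_two_mul_sum_sq a i j) (sq_nonneg x)

theorem sum_eq_zero_of_sq_sub_eq_two_mul_sum_sq {a : n → ℝ} {i j : n}
    (h : (a i - a j) ^ 2 = 2 * ∑ k, a k ^ 2) : ∑ k, a k = 0 := by
  classical
  obtain rfl | hij := eq_or_ne i j
  · have hsq : ∑ k, a k * a k = 0 := by simpa [sq] using h.symm
    exact sum_eq_zero ((sum_mul_self_eq_zero_iff _ _).mp hsq)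
  · have hsum := two_mul_sum_sq_sub_sq_sub_eq a hij
    have hrest : 0 ≤ ∑ k ∈ {i, j}ᶜ, a k ^ 2 := sum_nonneg fun k _ => sq_nonneg (a k)
    have hpair : a i + a j = 0 := by nlinarith [sq_nonneg (a i + a j)]
    have hrest0 : ∑ k ∈ {i, j}ᶜ, a k * a k = 0 := by
      simp only [← sq]
      nlinarith [sq_nonneg (a i + a j)]
    rw [← sum_add_sum_compl {i, j}, sum_pair hij, hpair,
      sum_eq_zero ((sum_mul_self_eq_zero_iff _ _).mp hrest0), add_zero]

theorem sum_sq_sub_mul_le [DecidableEq n] (a : n → ℝ) (B : Matrix n n ℝ) (i : n) :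
    ∑ j, ((a i - a j) * B i j) ^ 2 ≤ 2 * (∑ k, a k ^ 2) * (∑ j, B i j ^ 2 - B i i ^ 2) := by
  rw [← sum_erase univ (a := i) (by simp), ← sum_erase_eq_sub (mem_univ i), mul_sum]
  exact sum_le_sum fun j _ => sq_sub_mul_le a i j (B i j)

theorem sum_sq_sub_mul_add_two_mul_sq_le (a : n → ℝ) (B : Matrix n n ℝ) :
    ∑ i, ∑ j, ((a i - a j) * B i j) ^ 2 + 2 * (∑ i, a i * B i i) ^ 2
      ≤ 2 * (∑ i, a i ^ 2) * ∑ i, ∑ j, B i j ^ 2 := by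
  classical
  have hoff := sum_le_sum fun i (_ : i ∈ univ) => sum_sq_sub_mul_le a B i
  have hdiag := sum_mul_sq_le_sq_mul_sq univ a fun i => B i i
  rw [← mul_sum, sum_sub_distrib] at hoff
  nlinarith

theorem sum_eq_zero_of_sum_sq_sub_mul_eq {a : n → ℝ} {B : Matrix n n ℝ} (hB : B ≠ 0)
    (h : ∑ i, ∑ j, ((a i - a j) * B i j) ^ 2 = 2 * (∑ i, a i ^ 2) * ∑ i, ∑ j, B i j ^ 2) :
    ∑ i, a i = 0 := by
  obtain ⟨i, j, hBij⟩ : ∃ i j, B i j ≠ 0 := by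
    by_contra! h0
    exact hB (Matrix.ext h0)
  set c := 2 * ∑ k, a k ^ 2
  simp_rw [mul_sum] at h
  have hrow := (sum_eq_sum_iff_of_le fun i _ => sum_le_sum fun j _ =>
    sq_sub_mul_le a i j (B i j)).mp h i (mem_univ i)
  have hij := (sum_eq_sum_iff_of_le fun j _ => sq_sub_mul_le a i j (B i j)).mp hrow j (mem_univ j)
  rw [mul_pow] at hij
  exact sum_eq_zero_of_sq_sub_eq_two_mul_sum_sq (mul_right_cancel₀ (pow_ne_zero 2 hBij) hij)

end Finset

namespace Matrix

theorem trace_transpose_mul_self {m R : Type*} [Fintype m] [CommSemiring R] (X : Matrix m n R) :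
    (Xᵀ * X).trace = ∑ i, ∑ j, X i j ^ 2 := by
  simp only [trace, diag_apply, mul_apply, transpose_apply, sq]
  exact Finset.sum_comm

theorem trace_transpose_mul_self_eq_zero_iff {m R : Type*} [Fintype m] [PartialOrder R] [NonUnitalRing R]
    [StarRing R] [StarOrderedRing R] [NoZeroDivisors R] [TrivialStar R] {X : Matrix m n R} :
    (Xᵀ * X).trace = 0 ↔ X = 0 := by
  rw [← conjTranspose_eq_transpose_of_trivial]
  exact trace_conjTranspose_mul_self_eq_zero_iff

variable [DecidableEq n]

theorem diagonal_mul_sub_mul_diagonal_apply {R : Type*} [CommRing R] (a : n → R)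
    (B : Matrix n n R) (i j : n) :
    (diagonal a * B - B * diagonal a) i j = (a i - a j) * B i j := by
  simp only [sub_apply, diagonal_mul, mul_diagonal]
  ring

theorem trace_diagonal_mul {R : Type*} [Semiring R] (a : n → R) (B : Matrix n n R) :
    (diagonal a * B).trace = ∑ i, a i * B i i := by
  simp [trace, diagonal_mul]

theorem trace_transpose_diagonal_mul_diagonal {R : Type*} [CommSemiring R] (a : n → R) :
    ((diagonal a)ᵀ * diagonal a).trace = ∑ i, a i ^ 2 := by
  simp [sq]

theorem commutator_bound_diagonal (a : n → ℝ) (B : Matrix n n ℝ) :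
    ((diagonal a * B - B * diagonal a)ᵀ * (diagonal a * B - B * diagonal a)).trace
        + 2 * (diagonal a * B).trace ^ 2
      ≤ 2 * ((diagonal a)ᵀ * diagonal a).trace * (Bᵀ * B).trace := by
  rw [trace_transpose_diagonal_mul_diagonal, trace_transpose_mul_self, trace_transpose_mul_self,
    trace_diagonal_mul]
  simp only [diagonal_mul_sub_mul_diagonal_apply]
  exact Finset.sum_sq_sub_mul_add_two_mul_sq_le a B

theorem trace_eq_zero_of_commutator_eq_diagonal {a : n → ℝ} {B : Matrix n n ℝ} (hB : B ≠ 0)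
    (h : ((diagonal a * B - B * diagonal a)ᵀ * (diagonal a * B - B * diagonal a)).trace
      = 2 * ((diagonal a)ᵀ * diagonal a).trace * (Bᵀ * B).trace) :
    (diagonal a).trace = 0 := by
  rw [trace_transpose_diagonal_mul_diagonal, trace_transpose_mul_self,
    trace_transpose_mul_self] at h
  simp only [diagonal_mul_sub_mul_diagonal_apply] at h
  rw [trace_diagonal]
  exact Finset.sum_eq_zero_of_sum_sq_sub_mul_eq hB h

section Conj

variable {R : Type*} [CommRing R] [StarRing R] (u : unitary (Matrix n n R))

theorem trace_conjStarAlgAut (X : Matrix n n R) : (conjStarAlgAut R _ u X).trace = X.trace := by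
  rw [conjStarAlgAut_apply, trace_mul_cycle, coe_star_mul_self, one_mul]

theorem trace_mul_conjStarAlgAut (X Y : Matrix n n R) :
    (conjStarAlgAut R _ u X * conjStarAlgAut R _ u Y).trace = (X * Y).trace := by
  rw [← map_mul, trace_conjStarAlgAut]

theorem trace_transpose_mul_self_conjStarAlgAut [TrivialStar R] (X : Matrix n n R) :
    ((conjStarAlgAut R _ u X)ᵀ * conjStarAlgAut R _ u X).trace = (Xᵀ * X).trace := by
  simp only [← conjTranspose_eq_transpose_of_trivial, ← star_eq_conjTranspose, ← map_star]
  exact trace_mul_conjStarAlgAut u _ _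

end Conj

theorem IsSymm.exists_conjStarAlgAut_eq_diagonal {A : Matrix n n ℝ} (hA : A.IsSymm) :
    ∃ (u : unitary (Matrix n n ℝ)) (a : n → ℝ), conjStarAlgAut ℝ _ u A = diagonal a := by
  have hH : A.IsHermitian := isHermitian_iff_isSymm.mpr hA
  exact ⟨star hH.eigenvectorUnitary, hH.eigenvalues, hH.conjStarAlgAut_star_eigenvectorUnitary⟩

theorem IsSymm.commutator_bound {A : Matrix n n ℝ} (hA : A.IsSymm) (B : Matrix n n ℝ) :
    ((A * B - B * A)ᵀ * (A * B - B * A)).trace + 2 * (A * B).trace ^ 2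
      ≤ 2 * (Aᵀ * A).trace * (Bᵀ * B).trace := by
  obtain ⟨u, a, hu⟩ := hA.exists_conjStarAlgAut_eq_diagonal
  have := commutator_bound_diagonal a (conjStarAlgAut ℝ _ u B)
  rwa [← hu, ← map_mul, ← map_mul, ← map_sub, trace_transpose_mul_self_conjStarAlgAut,
    trace_conjStarAlgAut, trace_transpose_mul_self_conjStarAlgAut,
    trace_transpose_mul_self_conjStarAlgAut] at this

theorem IsSymm.trace_eq_zero_of_commutator_eq {A B : Matrix n n ℝ} (hA : A.IsSymm) (hB : B ≠ 0)
    (h : ((A * B - B * A)ᵀ * (A * B - B * A)).trace = 2 * (Aᵀ * A).trace * (Bᵀ * B).trace) :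
    A.trace = 0 := by
  obtain ⟨u, a, hu⟩ := hA.exists_conjStarAlgAut_eq_diagonal
  have hB' : conjStarAlgAut ℝ _ u B ≠ 0 := (map_ne_zero_iff _ (EquivLike.injective _)).mpr hB
  rw [← trace_conjStarAlgAut u, hu]
  refine trace_eq_zero_of_commutator_eq_diagonal hB' ?_
  rwa [← hu, ← map_mul, ← map_mul, ← map_sub, trace_transpose_mul_self_conjStarAlgAut,
    trace_transpose_mul_self_conjStarAlgAut, trace_transpose_mul_self_conjStarAlgAut]

end Matrix

/-- Equality case of the Li–Li inequality for `p = 2` symmetric matrices, with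
`N A = trace (Aᵀ A)`: if equality holds nontrivially, then `N(A₁) = N(A₂)`,
`trace (A₁ A₂) = 0`, and `trace A₁ = trace A₂ = 0`. -/
theorem li_li_equality_case (m : ℕ) (A₁ A₂ : Matrix (Fin m) (Fin m) ℝ)
    (h₁ : A₁.IsSymm) (h₂ : A₂.IsSymm)
    (heq : ((A₁ * A₂ - A₂ * A₁)ᵀ * (A₁ * A₂ - A₂ * A₁)).trace
        + ((A₂ * A₁ - A₁ * A₂)ᵀ * (A₂ * A₁ - A₁ * A₂)).trace
        + ((A₁ * A₂).trace) ^ 2 + ((A₂ * A₁).trace) ^ 2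
        + ((A₁ * A₁).trace) ^ 2 + ((A₂ * A₂).trace) ^ 2
      = (3 / 2 : ℝ) * ((A₁ᵀ * A₁).trace + (A₂ᵀ * A₂).trace) ^ 2)
    (hne : ¬(A₁ = 0 ∧ A₂ = 0)) :
    (A₁ᵀ * A₁).trace = (A₂ᵀ * A₂).trace ∧ (A₁ * A₂).trace = 0 ∧
      A₁.trace = 0 ∧ A₂.trace = 0 := by
  have hc : ((A₂ * A₁ - A₁ * A₂)ᵀ * (A₂ * A₁ - A₁ * A₂)).trace
      = ((A₁ * A₂ - A₂ * A₁)ᵀ * (A₁ * A₂ - A₂ * A₁)).trace := by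
    rw [← neg_sub, transpose_neg, neg_mul_neg]
  have hx : (A₁ * A₁).trace = (A₁ᵀ * A₁).trace := by rw [h₁.eq]
  have hy : (A₂ * A₂).trace = (A₂ᵀ * A₂).trace := by rw [h₂.eq]
  rw [hc, trace_mul_comm A₂, hx, hy] at heq
  have hbound := h₁.commutator_bound A₂
  set x := (A₁ᵀ * A₁).trace
  set y := (A₂ᵀ * A₂).trace
  set c := ((A₁ * A₂ - A₂ * A₁)ᵀ * (A₁ * A₂ - A₂ * A₁)).trace
  have hxy : x = y := by nlinarith [sq_nonneg (x - y), sq_nonneg (A₁ * A₂).trace]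
  have ht : (A₁ * A₂).trace = 0 := by nlinarith [sq_nonneg (x - y), sq_nonneg (A₁ * A₂).trace]
  have hcxy : c = 2 * x * y := by rw [ht, ← hxy] at heq; rw [← hxy]; linarith
  have hx0 : x = 0 ↔ A₁ = 0 := trace_transpose_mul_self_eq_zero_iff
  have hy0 : y = 0 ↔ A₂ = 0 := trace_transpose_mul_self_eq_zero_iff
  have hA₁ : A₁ ≠ 0 := fun h => hne ⟨h, hy0.mp (hxy ▸ hx0.mpr h)⟩
  have hA₂ : A₂ ≠ 0 := fun h => hne ⟨hx0.mp (hxy ▸ hy0.mpr h), h⟩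
  refine ⟨hxy, ht, h₁.trace_eq_zero_of_commutator_eq hA₂ hcxy, ?_⟩
  exact h₂.trace_eq_zero_of_commutator_eq hA₁ (by rw [hc, hcxy]; ring)
end

section
/- Let $K \in \mathbb{R}$ and let $\lambda_1, \ldots, \lambda_m$, $\mu_1, \ldots, \mu_m$ be real numbers with $\sum_i \mu_i = 0$ and $\lambda_i \lambda_j \geq K$ for all $i \neq j$. Then $(\sum_i \lambda_i)(\sum_j \lambda_j \mu_j^2) - (\sum_i \lambda_i \mu_i)^2 \geq m K \sum_i \mu_i^2$. -/
/-!
Both sides are weighted sums of the squared differences `(μᵢ - μⱼ)²`: the left side is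
`½ ∑ᵢⱼ λᵢλⱼ(μᵢ - μⱼ)²`, and, since `∑ μᵢ = 0`, the right side is `½ ∑ᵢⱼ K(μᵢ - μⱼ)²`.
The diagonal terms vanish, and off the diagonal `λᵢλⱼ ≥ K`.
-/

open Finset

section
variable {ι R : Type*} [Fintype ι]

theorem sum_sum_mul_mul_sub_sq [CommRing R] (lam mu : ι → R) :
    ∑ i, ∑ j, lam i * lam j * (mu i - mu j) ^ 2 =
      2 * ((∑ i, lam i) * (∑ i, lam i * mu i ^ 2) - (∑ i, lam i * mu i) ^ 2) := by
  have expand : ∀ i j, lam i * lam j * (mu i - mu j) ^ 2 =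
      lam i * mu i ^ 2 * lam j + lam i * (lam j * mu j ^ 2)
        - 2 * (lam i * mu i) * (lam j * mu j) := by
    intro i j; ring
  simp only [expand, sum_add_distrib, sum_sub_distrib, ← mul_sum, ← sum_mul]
  ring

theorem sum_sum_sub_sq [CommRing R] (mu : ι → R) :
    ∑ i, ∑ j, (mu i - mu j) ^ 2 = 2 * (Fintype.card ι * ∑ i, mu i ^ 2 - (∑ i, mu i) ^ 2) := by
  simpa using sum_sum_mul_mul_sub_sq (fun _ ↦ (1 : R)) mu

theorem mul_sum_sum_sub_sq_le [CommRing R] [LinearOrder R] [IsStrictOrderedRing R]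
    {K : R} {lam : ι → R} (hK : ∀ i j, i ≠ j → K ≤ lam i * lam j) (mu : ι → R) :
    K * ∑ i, ∑ j, (mu i - mu j) ^ 2 ≤ ∑ i, ∑ j, lam i * lam j * (mu i - mu j) ^ 2 := by
  simp only [mul_sum]
  refine sum_le_sum fun i _ ↦ sum_le_sum fun j _ ↦ ?_
  rcases eq_or_ne i j with rfl | hij
  · simp
  · exact mul_le_mul_of_nonneg_right (hK i j hij) (sq_nonneg _)

end

/-- If `∑ μᵢ = 0` and `λᵢ λⱼ ≥ K` for all `i ≠ j`, then
`(∑ λᵢ)(∑ λⱼ μⱼ²) - (∑ λᵢ μᵢ)² ≥ m K ∑ μᵢ²`. -/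
theorem trace_term_lower_bound (m : ℕ) (K : ℝ) (lam mu : Fin m → ℝ)
    (hmu : ∑ i, mu i = 0)
    (hK : ∀ i j : Fin m, i ≠ j → lam i * lam j ≥ K) :
    (∑ i, lam i) * (∑ j, lam j * (mu j) ^ 2) - (∑ i, lam i * mu i) ^ 2
      ≥ (m : ℝ) * K * ∑ i, (mu i) ^ 2 := by
  have key := mul_sum_sum_sub_sq_le hK mu
  rw [sum_sum_mul_mul_sub_sq, sum_sum_sub_sq, hmu, Fintype.card_fin] at key
  linarith
end
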